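/- arXiv:1508.06717 — 4 statements merged into one kernel-verified Lean document; each statement's English description precedes it below -/
import Mathlib

section
/- Let P > 0 and N > 0 be real numbers, and let FN₁, FP₁, FN₂, FP₂ be real numbers with 0 ≤ FNᵢ ≤ P and 0 ≤ FPᵢ ≤ N for i = 1, 2. Setting TPᵢ = P − FNᵢ and TNᵢ = N − FPᵢ, one has (TP₁/P)·(TN₁/N) ≥ (TP₂/P)·(TN₂/N) if and only if (N/P)·FN₁ + ((P − FN₁)/P)·FP₁ ≤ (N/P)·FN₂ + ((P − FN₂)/P)·FP₂. Hence maximizing the squared G-mean is equivalent to minimizing the objective (N/P)·FN + ((P − FN)/P)·FP. -/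
theorem sq_gmean_eq_one_sub_weighted_count_div {P N : ℝ} (hP : P ≠ 0) (hN : N ≠ 0) (FN FP : ℝ) :
    (P - FN) / P * ((N - FP) / N) = 1 - ((N / P) * FN + ((P - FN) / P) * FP) / N := by
  field_simp
  ring

theorem gmean_max_iff_weighted_min_general (P N : ℝ) (hP : 0 < P) (hN : 0 < N)
    (FN₁ FP₁ FN₂ FP₂ : ℝ)
    (TP₁ TN₁ TP₂ TN₂ : ℝ)
    (hTP₁ : TP₁ = P - FN₁) (hTN₁ : TN₁ = N - FP₁)
    (hTP₂ : TP₂ = P - FN₂) (hTN₂ : TN₂ = N - FP₂) :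
    (TP₁ / P) * (TN₁ / N) ≥ (TP₂ / P) * (TN₂ / N) ↔
      (N / P) * FN₁ + ((P - FN₁) / P) * FP₁ ≤
        (N / P) * FN₂ + ((P - FN₂) / P) * FP₂ := by
  subst hTP₁ hTN₁ hTP₂ hTN₂
  rw [ge_iff_le, sq_gmean_eq_one_sub_weighted_count_div hP.ne' hN.ne',
    sq_gmean_eq_one_sub_weighted_count_div hP.ne' hN.ne', sub_le_sub_iff_left,
    div_le_div_iff_of_pos_right hN]

theorem gmean_max_iff_weighted_min (P N : ℝ) (hP : 0 < P) (hN : 0 < N)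
    (FN₁ FP₁ FN₂ FP₂ : ℝ)
    (hFN₁ : 0 ≤ FN₁) (hFN₁' : FN₁ ≤ P) (hFP₁ : 0 ≤ FP₁) (hFP₁' : FP₁ ≤ N)
    (hFN₂ : 0 ≤ FN₂) (hFN₂' : FN₂ ≤ P) (hFP₂ : 0 ≤ FP₂) (hFP₂' : FP₂ ≤ N)
    (TP₁ TN₁ TP₂ TN₂ : ℝ)
    (hTP₁ : TP₁ = P - FN₁) (hTN₁ : TN₁ = N - FP₁)
    (hTP₂ : TP₂ = P - FN₂) (hTN₂ : TN₂ = N - FP₂) :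
    (TP₁ / P) * (TN₁ / N) ≥ (TP₂ / P) * (TN₂ / N) ↔
      (N / P) * FN₁ + ((P - FN₁) / P) * FP₁ ≤
        (N / P) * FN₂ + ((P - FN₂) / P) * FP₂ :=
  gmean_max_iff_weighted_min_general P N hP hN FN₁ FP₁ FN₂ FP₂ TP₁ TN₁ TP₂ TN₂ hTP₁ hTN₁ hTP₂ hTN₂
end

section
/- Let E be a real inner product space, let T ≥ 1 be a natural number, and let (x_t, y_t, ρ_t) for t = 1, …, T be a sequence with x_t ∈ E, ‖x_t‖ ≤ 1, y_t ∈ {−1, +1}, and ρ_t ∈ ℝ. Define per-round losses L_t(u) = max(0, ρ_t − y_t·⟪u, x_t⟫). Fix τ > 0 and define weights recursively by w_1 = 0 and w_{t+1} = w_t + τ·y_t • x_t if L_t(w_t) > 0, and w_{t+1} = w_t otherwise. Then for every w ∈ E, ∑_{t=1}^{T} L_t(w_t) ≤ ∑_{t=1}^{T} L_t(w) + ‖w‖²/(2τ) + τ·T/2. -/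
open scoped RealInnerProductSpace

theorem ogmean_regret_fixed_step {E : Type*} [NormedAddCommGroup E]
    [InnerProductSpace ℝ E] (T : ℕ) (hT : 1 ≤ T)
    (x : ℕ → E) (y ρ : ℕ → ℝ)
    (hx : ∀ t, 1 ≤ t → t ≤ T → ‖x t‖ ≤ 1)
    (hy : ∀ t, 1 ≤ t → t ≤ T → y t = -1 ∨ y t = 1)
    (τ : ℝ) (hτ : 0 < τ)
    (w : ℕ → E) (hw1 : w 1 = 0)
    (hrec : ∀ t, 1 ≤ t → t ≤ T →
      w (t + 1) =
        if 0 < max 0 (ρ t - y t * ⟪w t, x t⟫) then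
          w t + τ • ((y t) • (x t))
        else w t) :
    ∀ u : E,
      ∑ t ∈ Finset.Icc 1 T, max 0 (ρ t - y t * ⟪w t, x t⟫) ≤
        (∑ t ∈ Finset.Icc 1 T, max 0 (ρ t - y t * ⟪u, x t⟫))
          + ‖u‖ ^ 2 / (2 * τ) + τ * T / 2 := by
  intro u
  have h2τ : (0:ℝ) < 2 * τ := by linarith
  have key : ∀ t, 1 ≤ t → t ≤ T →
      max 0 (ρ t - y t * ⟪w t, x t⟫) ≤
        max 0 (ρ t - y t * ⟪u, x t⟫)
          + (‖w t - u‖ ^ 2 - ‖w (t+1) - u‖ ^ 2) / (2 * τ) + τ / 2 := by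
    intro t ht1 ht2
    have hrect := hrec t ht1 ht2
    by_cases h : 0 < max 0 (ρ t - y t * ⟪w t, x t⟫)
    · rw [if_pos h] at hrect
      have ha : 0 < ρ t - y t * ⟪w t, x t⟫ := by
        rcases lt_max_iff.mp h with h' | h'
        · exact absurd h' (lt_irrefl 0)
        · exact h'
      rw [max_eq_right ha.le]
      have hnorm : ‖w (t+1) - u‖ ^ 2 =
          ‖w t - u‖ ^ 2 + 2 * (τ * (y t * (⟪w t, x t⟫ - ⟪u, x t⟫)))
            + τ ^ 2 * (y t) ^ 2 * ‖x t‖ ^ 2 := by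
        rw [hrect]
        have h1 : w t + τ • ((y t) • (x t)) - u = (w t - u) + τ • ((y t) • (x t)) := by
          abel
        rw [h1, norm_add_sq_real]
        have hi : ⟪w t - u, τ • ((y t) • (x t))⟫ =
            τ * (y t * (⟪w t, x t⟫ - ⟪u, x t⟫)) := by
          rw [inner_smul_right, inner_smul_right, inner_sub_left]
        have hn : ‖τ • ((y t) • (x t))‖ ^ 2 = τ ^ 2 * (y t) ^ 2 * ‖x t‖ ^ 2 := by
          rw [norm_smul, norm_smul, mul_pow, mul_pow, Real.norm_eq_abs,
            Real.norm_eq_abs, sq_abs, sq_abs]; ring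
        rw [hi, hn]
      have hy2 : (y t) ^ 2 = 1 := by
        rcases hy t ht1 ht2 with h' | h' <;> rw [h'] <;> norm_num
      have hx2 : ‖x t‖ ^ 2 ≤ 1 := by
        have h1 := hx t ht1 ht2
        nlinarith [norm_nonneg (x t)]
      have hmax : ρ t - y t * ⟪u, x t⟫ ≤ max 0 (ρ t - y t * ⟪u, x t⟫) :=
        le_max_right _ _
      have main : 2 * τ * (ρ t - y t * ⟪w t, x t⟫) ≤
          2 * τ * (max 0 (ρ t - y t * ⟪u, x t⟫))
            + (‖w t - u‖ ^ 2 - ‖w (t+1) - u‖ ^ 2) + τ ^ 2 := by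
        nlinarith [hnorm, mul_le_mul_of_nonneg_left hmax h2τ.le,
          mul_le_mul_of_nonneg_left hx2 (sq_nonneg τ), hy2]
      have heq : (2 * τ * (max 0 (ρ t - y t * ⟪u, x t⟫))
            + (‖w t - u‖ ^ 2 - ‖w (t+1) - u‖ ^ 2) + τ ^ 2) / (2 * τ)
          = max 0 (ρ t - y t * ⟪u, x t⟫)
            + (‖w t - u‖ ^ 2 - ‖w (t+1) - u‖ ^ 2) / (2 * τ) + τ / 2 := by
        field_simp
      calc ρ t - y t * ⟪w t, x t⟫
          ≤ (2 * τ * (max 0 (ρ t - y t * ⟪u, x t⟫))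
            + (‖w t - u‖ ^ 2 - ‖w (t+1) - u‖ ^ 2) + τ ^ 2) / (2 * τ) := by
            rw [le_div_iff₀ h2τ]; nlinarith [main]
        _ = _ := heq
    · rw [if_neg h] at hrect
      push_neg at h
      have h0 : max 0 (ρ t - y t * ⟪w t, x t⟫) = 0 :=
        le_antisymm h (le_max_left _ _)
      rw [h0, hrect, sub_self, zero_div]
      have := le_max_left 0 (ρ t - y t * ⟪u, x t⟫)
      linarith
  have hsum : ∑ t ∈ Finset.Icc 1 T, max 0 (ρ t - y t * ⟪w t, x t⟫) ≤
      ∑ t ∈ Finset.Icc 1 T, (max 0 (ρ t - y t * ⟪u, x t⟫)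
        + (‖w t - u‖ ^ 2 - ‖w (t+1) - u‖ ^ 2) / (2 * τ) + τ / 2) := by
    refine Finset.sum_le_sum fun t ht => ?_
    obtain ⟨h1, h2⟩ := Finset.mem_Icc.mp ht
    exact key t h1 h2
  have hsplit : ∑ t ∈ Finset.Icc 1 T, (max 0 (ρ t - y t * ⟪u, x t⟫)
        + (‖w t - u‖ ^ 2 - ‖w (t+1) - u‖ ^ 2) / (2 * τ) + τ / 2)
      = (∑ t ∈ Finset.Icc 1 T, max 0 (ρ t - y t * ⟪u, x t⟫))
        + (∑ t ∈ Finset.Icc 1 T, (‖w t - u‖ ^ 2 - ‖w (t+1) - u‖ ^ 2)) / (2 * τ)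
        + τ * T / 2 := by
    rw [Finset.sum_add_distrib, Finset.sum_add_distrib, Finset.sum_div,
      Finset.sum_const, Nat.card_Icc]
    simp only [nsmul_eq_mul]
    have : (T + 1 - 1 : ℕ) = T := by omega
    rw [this]
    ring
  have htel : ∑ t ∈ Finset.Icc 1 T, (‖w t - u‖ ^ 2 - ‖w (t+1) - u‖ ^ 2)
      = ‖w 1 - u‖ ^ 2 - ‖w (T+1) - u‖ ^ 2 := by
    rw [← Finset.Ico_add_one_right_eq_Icc, Finset.sum_Ico_eq_sum_range]
    have hT' : (T + 1 - 1 : ℕ) = T := by omega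
    rw [hT']
    have := Finset.sum_range_sub' (fun i => ‖w (i + 1) - u‖ ^ 2) T
    simpa [add_comm] using this
  have hbound : (‖w 1 - u‖ ^ 2 - ‖w (T+1) - u‖ ^ 2) / (2 * τ) ≤ ‖u‖ ^ 2 / (2 * τ) := by
    gcongr
    rw [hw1, zero_sub, norm_neg]
    nlinarith [sq_nonneg (‖w (T+1) - u‖)]
  calc _ ≤ _ := hsum
    _ = _ := hsplit
    _ ≤ _ := by rw [htel]; linarith [hbound]
end

section
/- Let E be a real inner product space, let T ≥ 1 be a natural number, and let (x_t, y_t, ρ_t) for t = 1, …, T be a sequence with x_t ∈ E, ‖x_t‖ ≤ 1, y_t ∈ {−1, +1}, and ρ_t ∈ ℝ. Define per-round losses L_t(u) = max(0, ρ_t − y_t·⟪u, x_t⟫). Fix a comparator w ∈ E with w ≠ 0, set the learning rate τ = ‖w‖/√T, and define weights recursively by w_1 = 0 and w_{t+1} = w_t + τ·y_t • x_t if L_t(w_t) > 0, and w_{t+1} = w_t otherwise. Then ∑_{t=1}^{T} L_t(w_t) ≤ ∑_{t=1}^{T} L_t(w) + ‖w‖·√T. -/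
open scoped RealInnerProductSpace

theorem ogmean_relative_loss_bound {E : Type*} [NormedAddCommGroup E]
    [InnerProductSpace ℝ E] (T : ℕ) (hT : 1 ≤ T)
    (x : ℕ → E) (y ρ : ℕ → ℝ)
    (hx : ∀ t, 1 ≤ t → t ≤ T → ‖x t‖ ≤ 1)
    (hy : ∀ t, 1 ≤ t → t ≤ T → y t = -1 ∨ y t = 1)
    (u : E) (hu : u ≠ 0)
    (τ : ℝ) (hτ : τ = ‖u‖ / Real.sqrt T)
    (w : ℕ → E) (hw1 : w 1 = 0)
    (hrec : ∀ t, 1 ≤ t → t ≤ T →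
      w (t + 1) =
        if 0 < max 0 (ρ t - y t * ⟪w t, x t⟫) then
          w t + τ • ((y t) • (x t))
        else w t) :
    ∑ t ∈ Finset.Icc 1 T, max 0 (ρ t - y t * ⟪w t, x t⟫) ≤
      (∑ t ∈ Finset.Icc 1 T, max 0 (ρ t - y t * ⟪u, x t⟫))
        + ‖u‖ * Real.sqrt T := by
  have hTpos : (0:ℝ) < Real.sqrt T := by
    apply Real.sqrt_pos.mpr
    exact_mod_cast Nat.lt_of_lt_of_le Nat.zero_lt_one hT
  have hupos : (0:ℝ) < ‖u‖ := norm_pos_iff.mpr hu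
  have hτpos : 0 < τ := by
    rw [hτ]; positivity
  set f : ℕ → ℝ := fun t => ‖w t - u‖^2 with hf
  -- per-round bound
  have key : ∀ t ∈ Finset.Icc 1 T,
      max 0 (ρ t - y t * ⟪w t, x t⟫) ≤
        max 0 (ρ t - y t * ⟪u, x t⟫) + (f t - f (t+1)) / (2*τ) + τ/2 := by
    intro t ht
    rw [Finset.mem_Icc] at ht
    obtain ⟨ht1, ht2⟩ := ht
    have hrect := hrec t ht1 ht2
    by_cases hpos : 0 < max 0 (ρ t - y t * ⟪w t, x t⟫)
    · rw [if_pos hpos] at hrect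
      have hy2 : (y t)^2 = 1 := by
        rcases hy t ht1 ht2 with h | h <;> rw [h] <;> ring
      have hxn : ‖x t‖ ≤ 1 := hx t ht1 ht2
      have hLt : max 0 (ρ t - y t * ⟪w t, x t⟫) = ρ t - y t * ⟪w t, x t⟫ := by
        rcases max_cases (0:ℝ) (ρ t - y t * ⟪w t, x t⟫) with ⟨h1, h2⟩ | ⟨h1, h2⟩
        · exfalso; rw [h1] at hpos; exact lt_irrefl 0 hpos
        · exact h1
      -- expand f (t+1)
      have hexp : f (t+1) = f t + 2 * τ * (y t * ⟪w t - u, x t⟫) + τ^2 * (y t)^2 * ‖x t‖^2 := by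
        simp only [hf, hrect]
        have h1 : w t + τ • y t • x t - u = (w t - u) + τ • y t • x t := by abel
        rw [h1, norm_add_sq_real, real_inner_smul_right, real_inner_smul_right,
          norm_smul, norm_smul, mul_pow, mul_pow, Real.norm_eq_abs, Real.norm_eq_abs,
          sq_abs, sq_abs]
        ring
      have hdiff : f t - f (t+1) = -(2 * τ * (y t * ⟪w t - u, x t⟫)) - τ^2 * (y t)^2 * ‖x t‖^2 := by
        rw [hexp]; ring
      have hx2 : ‖x t‖^2 ≤ 1 := by nlinarith [norm_nonneg (x t)]
      have hxsq : τ^2 * (y t)^2 * ‖x t‖^2 ≤ τ^2 := by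
        rw [hy2]
        nlinarith [sq_nonneg τ]
      have hquot : -(y t * ⟪w t - u, x t⟫) - τ/2 ≤ (f t - f (t+1)) / (2*τ) := by
        rw [hdiff, le_div_iff₀ (by positivity : (0:ℝ) < 2*τ)]
        nlinarith
      have hinner : ⟪w t - u, x t⟫ = ⟪w t, x t⟫ - ⟪u, x t⟫ := by
        rw [inner_sub_left]
      have hmaxu : ρ t - y t * ⟪u, x t⟫ ≤ max 0 (ρ t - y t * ⟪u, x t⟫) := le_max_right _ _
      rw [hLt]
      have : ρ t - y t * ⟪w t, x t⟫ =
          (ρ t - y t * ⟪u, x t⟫) + (-(y t * ⟪w t - u, x t⟫) - τ/2) + τ/2 := by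
        rw [hinner]; ring
      rw [this]
      gcongr
    · rw [if_neg hpos] at hrect
      push_neg at hpos
      have h0 : max 0 (ρ t - y t * ⟪w t, x t⟫) = 0 := le_antisymm hpos (le_max_left _ _)
      rw [h0]
      have : f t - f (t+1) = 0 := by simp [hf, hrect]
      rw [this]
      have := le_max_left (0:ℝ) (ρ t - y t * ⟪u, x t⟫)
      positivity
  have hsum := Finset.sum_le_sum key
  -- telescoping
  have htel : ∑ t ∈ Finset.Icc 1 T, (f t - f (t+1)) = f 1 - f (T+1) := by
    rw [← Finset.Ico_add_one_right_eq_Icc, Finset.sum_Ico_eq_sum_range]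
    have := Finset.sum_range_sub' (fun i => f (1 + i)) T
    simpa [add_comm, add_assoc, add_left_comm] using this
  have hf1 : f 1 = ‖u‖^2 := by simp [hf, hw1]
  have hfT : 0 ≤ f (T+1) := by positivity
  calc ∑ t ∈ Finset.Icc 1 T, max 0 (ρ t - y t * ⟪w t, x t⟫)
      ≤ ∑ t ∈ Finset.Icc 1 T,
          (max 0 (ρ t - y t * ⟪u, x t⟫) + (f t - f (t+1)) / (2*τ) + τ/2) := hsum
    _ = (∑ t ∈ Finset.Icc 1 T, max 0 (ρ t - y t * ⟪u, x t⟫))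
        + (∑ t ∈ Finset.Icc 1 T, (f t - f (t+1))) / (2*τ) + T * (τ/2) := by
        rw [Finset.sum_add_distrib, Finset.sum_add_distrib, Finset.sum_div]
        simp [Nat.Icc_eq_range', mul_comm]
    _ ≤ (∑ t ∈ Finset.Icc 1 T, max 0 (ρ t - y t * ⟪u, x t⟫))
        + ‖u‖^2 / (2*τ) + T * (τ/2) := by
        rw [htel, hf1]
        gcongr
        · linarith
    _ = (∑ t ∈ Finset.Icc 1 T, max 0 (ρ t - y t * ⟪u, x t⟫)) + ‖u‖ * Real.sqrt T := by
        have hs0 : Real.sqrt T ≠ 0 := ne_of_gt hTpos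
        have hu0 : ‖u‖ ≠ 0 := ne_of_gt hupos
        set s := Real.sqrt T with hs
        have hTs : (T:ℝ) = s * s := (Real.mul_self_sqrt (by positivity : (0:ℝ) ≤ (T:ℝ))).symm
        rw [hτ, hTs]
        field_simp
        ring
end

section
/- Let E be a real inner product space, let T ≥ 1 be a natural number, and let (x_t, y_t, ρ_t) for t = 1, …, T be a sequence with x_t ∈ E, ‖x_t‖ ≤ 1, y_t ∈ {−1, +1}, and ρ_t ≥ 0. Define per-round losses L_t(u) = max(0, ρ_t − y_t·⟪u, x_t⟫). Fix a comparator w ∈ E with w ≠ 0, set τ = ‖w‖/√T, and define weights recursively by w_1 = 0 and w_{t+1} = w_t + τ·y_t • x_t if L_t(w_t) > 0, and w_{t+1} = w_t otherwise. Then the cumulative weighted mistake cost satisfies ∑_{t : y_t·⟪w_t, x_t⟫ < 0} ρ_t ≤ ∑_{t=1}^{T} L_t(w) + ‖w‖·√T. -/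
open scoped RealInnerProductSpace

theorem ogmean_weighted_mistake_bound {E : Type*} [NormedAddCommGroup E]
    [InnerProductSpace ℝ E] (T : ℕ) (hT : 1 ≤ T)
    (x : ℕ → E) (y ρ : ℕ → ℝ)
    (hx : ∀ t, 1 ≤ t → t ≤ T → ‖x t‖ ≤ 1)
    (hy : ∀ t, 1 ≤ t → t ≤ T → y t = -1 ∨ y t = 1)
    (hρ : ∀ t, 1 ≤ t → t ≤ T → 0 ≤ ρ t)
    (u : E) (hu : u ≠ 0)
    (τ : ℝ) (hτ : τ = ‖u‖ / Real.sqrt T)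
    (w : ℕ → E) (hw1 : w 1 = 0)
    (hrec : ∀ t, 1 ≤ t → t ≤ T →
      w (t + 1) =
        if 0 < max 0 (ρ t - y t * ⟪w t, x t⟫) then
          w t + τ • ((y t) • (x t))
        else w t) :
    ∑ t ∈ (Finset.Icc 1 T).filter (fun t => y t * ⟪w t, x t⟫ < 0), ρ t ≤
      (∑ t ∈ Finset.Icc 1 T, max 0 (ρ t - y t * ⟪u, x t⟫))
        + ‖u‖ * Real.sqrt T := by
  have hT0 : (0:ℝ) < (T:ℝ) := by exact_mod_cast Nat.lt_of_lt_of_le Nat.zero_lt_one hT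
  have hsT : 0 < Real.sqrt T := Real.sqrt_pos.mpr hT0
  have hupos : 0 < ‖u‖ := norm_pos_iff.mpr hu
  have hτpos : 0 < τ := by rw [hτ]; positivity
  have step : ∀ t, 1 ≤ t → t ≤ T →
      max 0 (ρ t - y t * ⟪w t, x t⟫) ≤ max 0 (ρ t - y t * ⟪u, x t⟫)
        + ((‖w t - u‖^2 - ‖w (t+1) - u‖^2)/(2*τ) + τ/2) := by
    intro t h1 h2
    by_cases hpos : 0 < max 0 (ρ t - y t * ⟪w t, x t⟫)
    · have hup : w (t+1) = w t + τ • (y t • x t) := by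
        rw [hrec t h1 h2, if_pos hpos]
      have hy2 : (y t)^2 = 1 := by rcases hy t h1 h2 with h | h <;> rw [h] <;> norm_num
      have hxn : ‖x t‖ ≤ 1 := hx t h1 h2
      have hxnn : (0:ℝ) ≤ ‖x t‖ := norm_nonneg _
      have hexp : ‖w (t+1) - u‖^2
          = ‖w t - u‖^2 + 2*(τ * (y t * (⟪w t, x t⟫ - ⟪u, x t⟫))) + τ^2 * ‖x t‖^2 := by
        rw [hup, show w t + τ • (y t • x t) - u = (w t - u) + τ • (y t • x t) by abel]
        rw [norm_add_sq_real]
        have ha : ⟪w t - u, τ • (y t • x t)⟫ = τ * (y t * (⟪w t, x t⟫ - ⟪u, x t⟫)) := by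
          rw [real_inner_smul_right, real_inner_smul_right, inner_sub_left]
        have hb : ‖τ • (y t • x t)‖^2 = τ^2 * ‖x t‖^2 := by
          rw [norm_smul, norm_smul, mul_pow, mul_pow, Real.norm_eq_abs, Real.norm_eq_abs, sq_abs, sq_abs, hy2]; try ring
        rw [ha, hb]
      have hdiv : (‖w t - u‖^2 - ‖w (t+1) - u‖^2)/(2*τ)
          = -(y t * (⟪w t, x t⟫ - ⟪u, x t⟫)) - τ * ‖x t‖^2 / 2 := by
        rw [hexp]; field_simp; ring
      have hM : ρ t - y t * ⟪u, x t⟫ ≤ max 0 (ρ t - y t * ⟪u, x t⟫) := le_max_right _ _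
      have hL : max 0 (ρ t - y t * ⟪w t, x t⟫) = ρ t - y t * ⟪w t, x t⟫ := by
        apply max_eq_right
        by_contra h
        push_neg at h
        rw [max_eq_left h.le] at hpos
        exact lt_irrefl 0 hpos
      have hx2 : ‖x t‖^2 ≤ 1 := by nlinarith
      have hxx : τ * ‖x t‖^2 / 2 ≤ τ / 2 := by
        have := mul_le_mul_of_nonneg_left hx2 hτpos.le
        linarith
      rw [hL, hdiv]; linarith
    · have hup : w (t+1) = w t := by rw [hrec t h1 h2, if_neg hpos]
      rw [hup, sub_self, zero_div]
      have h0 : max 0 (ρ t - y t * ⟪w t, x t⟫) ≤ 0 := not_lt.mp hpos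
      have h1' : (0:ℝ) ≤ max 0 (ρ t - y t * ⟪u, x t⟫) := le_max_left _ _
      linarith
  have sum1 : ∑ t ∈ (Finset.Icc 1 T).filter (fun t => y t * ⟪w t, x t⟫ < 0), ρ t
      ≤ ∑ t ∈ Finset.Icc 1 T, max 0 (ρ t - y t * ⟪w t, x t⟫) := by
    calc ∑ t ∈ (Finset.Icc 1 T).filter (fun t => y t * ⟪w t, x t⟫ < 0), ρ t
        ≤ ∑ t ∈ (Finset.Icc 1 T).filter (fun t => y t * ⟪w t, x t⟫ < 0),
            max 0 (ρ t - y t * ⟪w t, x t⟫) := by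
          refine Finset.sum_le_sum ?_
          intro t ht
          obtain ⟨htI, htc⟩ := Finset.mem_filter.mp ht
          obtain ⟨ht1, ht2⟩ := Finset.mem_Icc.mp htI
          have := hρ t ht1 ht2
          have : ρ t ≤ ρ t - y t * ⟪w t, x t⟫ := by linarith
          exact this.trans (le_max_right _ _)
      _ ≤ ∑ t ∈ Finset.Icc 1 T, max 0 (ρ t - y t * ⟪w t, x t⟫) := by
          refine Finset.sum_le_sum_of_subset_of_nonneg (Finset.filter_subset _ _) ?_
          intro t _ _
          exact le_max_left _ _
  have htel : ∑ t ∈ Finset.Icc 1 T, (‖w t - u‖^2 - ‖w (t+1) - u‖^2)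
      = ‖w 1 - u‖^2 - ‖w (T+1) - u‖^2 := by
    rw [show Finset.Icc 1 T = Finset.Ico 1 (T+1) from (Finset.Ico_add_one_right_eq_Icc 1 T).symm]
    rw [Finset.sum_Ico_eq_sum_range]
    have := Finset.sum_range_sub' (fun i => ‖w (1+i) - u‖^2) T
    simpa [Nat.add_comm] using this
  have sum2 : ∑ t ∈ Finset.Icc 1 T, max 0 (ρ t - y t * ⟪w t, x t⟫)
      ≤ (∑ t ∈ Finset.Icc 1 T, max 0 (ρ t - y t * ⟪u, x t⟫))
        + ((‖w 1 - u‖^2 - ‖w (T+1) - u‖^2)/(2*τ) + T * (τ/2)) := by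
    have h := Finset.sum_le_sum (fun t ht => step t (Finset.mem_Icc.mp ht).1 (Finset.mem_Icc.mp ht).2)
    rw [Finset.sum_add_distrib, Finset.sum_add_distrib, Finset.sum_const,
      ← Finset.sum_div, htel, Nat.card_Icc] at h
    simpa [nsmul_eq_mul] using h
  have hw1u : ‖w 1 - u‖ = ‖u‖ := by rw [hw1, zero_sub, norm_neg]
  have hfinal : (‖w 1 - u‖^2 - ‖w (T+1) - u‖^2)/(2*τ) + T * (τ/2) ≤ ‖u‖ * Real.sqrt T := by
    rw [hw1u]
    have hnn : (0:ℝ) ≤ ‖w (T+1) - u‖^2 := sq_nonneg _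
    have hle : (‖u‖^2 - ‖w (T+1) - u‖^2)/(2*τ) ≤ ‖u‖^2/(2*τ) := by
      apply div_le_div_of_nonneg_right ?_ (by linarith) |>.trans_eq rfl
      linarith
    have hsq : Real.sqrt T * Real.sqrt T = T := Real.mul_self_sqrt hT0.le
    have heq : ‖u‖^2/(2*τ) + T * (τ/2) = ‖u‖ * Real.sqrt T := by
      rw [hτ]
      field_simp
      nlinarith [hsq, hupos, hsT]
    linarith
  linarith
end
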